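/- Let X be a quasi-Banach function space over ℝ^d. If X ∈ A, then X' satisfies the saturation property (hence is a Banach function space over ℝ^d) and X' ∈ A with [X']_A ≤ [X]_A. If X is a Banach function space over ℝ^d with the Fatou property, then X ∈ A if and only if X' ∈ A, with [X']_A = [X]_A. The analogous two statements hold with A replaced by A_strong and with A replaced by A_sparse (with the same inequalities and equalities between the corresponding constants). -/

import Mathlib

open MeasureTheory ENNReal Filter

noncomputable section

abbrev FnSp (d : ℕ) := (Fin d → ℝ) → ℝ

/-- A quasi-Banach function space over `ℝ^d`, encoded by a total
`ℝ≥0∞`-valued quasinorm (with `enorm f = ∞` when `f` is not in the space). -/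
structure QBFS (d : ℕ) where
  enorm : FnSp d → ℝ≥0∞
  K : ℝ≥0∞
  one_le_K : 1 ≤ K
  K_lt_top : K < ⊤
  enorm_congr : ∀ f g : FnSp d, f =ᵐ[volume] g → enorm f = enorm g
  enorm_smul : ∀ (c : ℝ) (f : FnSp d), enorm (c • f) = ENNReal.ofReal |c| * enorm f
  enorm_triangle : ∀ f g : FnSp d, enorm (f + g) ≤ K * (enorm f + enorm g)
  enorm_definite : ∀ f : FnSp d, AEMeasurable f volume → enorm f = 0 → f =ᵐ[volume] 0
  ideal : ∀ f g : FnSp d, AEMeasurable f volume → AEMeasurable g volume →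
    (∀ᵐ x ∂volume, |g x| ≤ |f x|) → enorm g ≤ enorm f
  saturation : ∀ E : Set (Fin d → ℝ), MeasurableSet E → 0 < volume E →
    ∃ F : Set (Fin d → ℝ), F ⊆ E ∧ MeasurableSet F ∧ 0 < volume F ∧
      enorm (F.indicator fun _ => (1 : ℝ)) < ⊤
  complete : ∀ f : ℕ → FnSp d,
    (∀ n, AEMeasurable (f n) volume ∧ enorm (f n) < ⊤) →
    (∀ ε : ℝ≥0∞, 0 < ε → ∃ N : ℕ, ∀ m ≥ N, ∀ n ≥ N, enorm (f m - f n) < ε) →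
    ∃ g : FnSp d, AEMeasurable g volume ∧ enorm g < ⊤ ∧
      Tendsto (fun n => enorm (f n - g)) atTop (nhds 0)

/-- Membership in the function space with quasinorm `N`. -/
def MemN {d : ℕ} (N : FnSp d → ℝ≥0∞) (f : FnSp d) : Prop :=
  AEMeasurable f volume ∧ N f < ⊤

def QBFS.Mem {d : ℕ} (X : QBFS d) (f : FnSp d) : Prop := MemN X.enorm f

/-- The Köthe dual norm of the quasinorm `N`. -/
def dualENormN {d : ℕ} (N : FnSp d → ℝ≥0∞) (g : FnSp d) : ℝ≥0∞ :=
  ⨆ f ∈ {f : FnSp d | AEMeasurable f volume ∧ N f = 1},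
    ∫⁻ x, ENNReal.ofReal |f x * g x|

/-- An axis-parallel cube in `ℝ^d`. -/
structure Cube (d : ℕ) where
  corner : Fin d → ℝ
  side : ℝ
  side_pos : 0 < side

/-- The (closed) cube as a subset of `ℝ^d`. -/
def Cube.set {d : ℕ} (Q : Cube d) : Set (Fin d → ℝ) :=
  Set.Icc Q.corner (fun i => Q.corner i + Q.side)

/-- The half-open realization of a cube (used for dyadic grids). -/
def Cube.hset {d : ℕ} (Q : Cube d) : Set (Fin d → ℝ) :=
  {x | ∀ i, Q.corner i ≤ x i ∧ x i < Q.corner i + Q.side}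

/-- The indicator function `1_Q` of a cube. -/
def cubeInd {d : ℕ} (Q : Cube d) : FnSp d := Q.set.indicator fun _ => (1 : ℝ)

/-- The average `⟨f⟩_{1,Q}`, valued in `ℝ≥0∞`. -/
def avg {d : ℕ} (Q : Cube d) (f : FnSp d) : ℝ≥0∞ :=
  (∫⁻ x in Q.set, ENNReal.ofReal |f x|) / volume Q.set

/-- The `L^r`-average `⟨f⟩_{r,Q}`, valued in `ℝ≥0∞`. -/
def avgR {d : ℕ} (r : ℝ) (Q : Cube d) (f : FnSp d) : ℝ≥0∞ :=
  ((∫⁻ x in Q.set, ENNReal.ofReal |f x| ^ r) / volume Q.set) ^ (1 / r)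

/-- The signed average `⟨f⟩_Q`. -/
def savg {d : ℕ} (Q : Cube d) (f : FnSp d) : ℝ :=
  (∫ x in Q.set, f x) / (volume Q.set).toReal

def PairwiseDisjointCubes {d : ℕ} (P : Set (Cube d)) : Prop :=
  P.Pairwise fun Q Q' => Disjoint Q.set Q'.set

/-- An `η`-sparse collection of cubes. -/
def IsSparse {d : ℕ} (η : ℝ) (S : Set (Cube d)) : Prop :=
  ∃ E : Cube d → Set (Fin d → ℝ),
    (∀ Q ∈ S, MeasurableSet (E Q) ∧ E Q ⊆ Q.set ∧
      ENNReal.ofReal η * volume Q.set ≤ volume (E Q)) ∧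
    S.Pairwise fun Q Q' => Disjoint (E Q) (E Q')

/-- `A_𝒫 f = ∑_{Q ∈ 𝒫} ⟨f⟩_{1,Q} 1_Q`, valued in `ℝ≥0∞`. -/
def avgSumE {d : ℕ} (P : Set (Cube d)) (f : FnSp d) : (Fin d → ℝ) → ℝ≥0∞ :=
  fun x => ∑' Q : P, Q.1.set.indicator (fun _ => avg Q.1 f) x

/-- The Hardy–Littlewood maximal function, valued in `ℝ≥0∞`. -/
def maximalE {d : ℕ} (f : FnSp d) : (Fin d → ℝ) → ℝ≥0∞ :=
  fun x => ⨆ (Q : Cube d) (_ : x ∈ Q.set), avg Q f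

def maximalFn {d : ℕ} (f : FnSp d) : FnSp d := fun x => (maximalE f x).toReal

/-- The weak quasinorm `sup_{λ>0} ‖λ 1_{F > λ}‖` of an `ℝ≥0∞`-valued function. -/
def weakENormE {d : ℕ} (N : FnSp d → ℝ≥0∞) (F : (Fin d → ℝ) → ℝ≥0∞) : ℝ≥0∞ :=
  ⨆ l ∈ Set.Ioi (0 : ℝ), N ({x | ENNReal.ofReal l < F x}.indicator fun _ => l)

def weakENorm {d : ℕ} (N : FnSp d → ℝ≥0∞) (g : FnSp d) : ℝ≥0∞ :=
  weakENormE N fun x => ENNReal.ofReal |g x|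

/-- Boundedness of the averaging operator `T_Q` with constant `C`. -/
def TQBound {d : ℕ} (N : FnSp d → ℝ≥0∞) (Q : Cube d) (C : ℝ≥0∞) : Prop :=
  ∀ f : FnSp d, MemN N f → avg Q f ≠ ⊤ ∧
    N (Q.set.indicator fun _ => (avg Q f).toReal) ≤ C * N f

/-- Weak boundedness of the averaging operator `T_Q` with constant `C`. -/
def TQWeakBound {d : ℕ} (N : FnSp d → ℝ≥0∞) (Q : Cube d) (C : ℝ≥0∞) : Prop :=
  ∀ f : FnSp d, MemN N f →
    weakENormE N (Q.set.indicator fun _ => avg Q f) ≤ C * N f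

/-- `X ∈ A_strong` with constant `C`. -/
def StrongBoundN {d : ℕ} (N : FnSp d → ℝ≥0∞) (C : ℝ≥0∞) : Prop :=
  ∀ P : Set (Cube d), PairwiseDisjointCubes P → ∀ f : FnSp d, MemN N f →
    (∀ᵐ x ∂volume, avgSumE P f x ≠ ⊤) ∧
    AEMeasurable (fun x => (avgSumE P f x).toReal) volume ∧
    N (fun x => (avgSumE P f x).toReal) ≤ C * N f

/-- Boundedness of a single sparse operator `A_𝒮` with constant `C`. -/
def SparseBoundOneN {d : ℕ} (N : FnSp d → ℝ≥0∞) (S : Set (Cube d)) (C : ℝ≥0∞) : Prop :=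
  ∀ f : FnSp d, MemN N f →
    (∀ᵐ x ∂volume, avgSumE S f x ≠ ⊤) ∧
    AEMeasurable (fun x => (avgSumE S f x).toReal) volume ∧
    N (fun x => (avgSumE S f x).toReal) ≤ C * N f

/-- `X ∈ A_sparse` with constant `C`. -/
def SparseBoundN {d : ℕ} (N : FnSp d → ℝ≥0∞) (C : ℝ≥0∞) : Prop :=
  ∀ S : Set (Cube d), IsSparse (1 / 2) S → SparseBoundOneN N S C

/-- Weak boundedness of a single sparse operator `A_𝒮` with constant `C`. -/
def SparseWeakBoundOneN {d : ℕ} (N : FnSp d → ℝ≥0∞) (S : Set (Cube d)) (C : ℝ≥0∞) : Prop :=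
  ∀ f : FnSp d, MemN N f → weakENormE N (avgSumE S f) ≤ C * N f

/-- `M : X → X` with constant `C`. -/
def MBoundN {d : ℕ} (N : FnSp d → ℝ≥0∞) (C : ℝ≥0∞) : Prop :=
  ∀ f : FnSp d, MemN N f →
    (∀ᵐ x ∂volume, maximalE f x ≠ ⊤) ∧
    AEMeasurable (maximalFn f) volume ∧
    N (maximalFn f) ≤ C * N f

/-- `M : X → X_weak` with constant `C`. -/
def MWeakBoundN {d : ℕ} (N : FnSp d → ℝ≥0∞) (C : ℝ≥0∞) : Prop :=
  ∀ f : FnSp d, MemN N f → weakENormE N (maximalE f) ≤ C * N f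

/-- The Muckenhoupt constant `[X]_A`. -/
def muckAConstN {d : ℕ} (N : FnSp d → ℝ≥0∞) : ℝ≥0∞ :=
  ⨆ Q : Cube d, N (cubeInd Q) * dualENormN N (cubeInd Q) / volume Q.set

/-- The Muckenhoupt condition `X ∈ A`. -/
def MuckAN {d : ℕ} (N : FnSp d → ℝ≥0∞) : Prop :=
  (∀ Q : Cube d, N (cubeInd Q) < ⊤ ∧ dualENormN N (cubeInd Q) < ⊤) ∧
    muckAConstN N < ⊤

/-- The Fatou property. -/
def HasFatou {d : ℕ} (X : QBFS d) : Prop :=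
  ∀ (f : ℕ → FnSp d) (g : FnSp d),
    (∀ n, AEMeasurable (f n) volume) → AEMeasurable g volume →
    (∀ n, ∀ᵐ x ∂volume, 0 ≤ f n x ∧ f n x ≤ f (n + 1) x) →
    (∀ᵐ x ∂volume, Tendsto (fun n => f n x) atTop (nhds (g x))) →
    (⨆ n, X.enorm (f n)) < ⊤ →
    X.enorm g = ⨆ n, X.enorm (f n)

/-- Order-continuity. -/
def OrderCont {d : ℕ} (X : QBFS d) : Prop :=
  ∀ f : ℕ → FnSp d, (∀ n, X.Mem (f n)) →
    (∀ n, ∀ᵐ x ∂volume, 0 ≤ f (n + 1) x ∧ f (n + 1) x ≤ f n x) →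
    (∀ᵐ x ∂volume, Tendsto (fun n => f n x) atTop (nhds 0)) →
    Tendsto (fun n => X.enorm (f n)) atTop (nhds 0)

/-- `X` is a Banach function space: the quasinorm is a norm. -/
def IsBanachFS {d : ℕ} (X : QBFS d) : Prop :=
  ∀ f g : FnSp d, X.enorm (f + g) ≤ X.enorm f + X.enorm g

/-- The `r`-concavification `X^r` of a quasinorm. -/
def concN {d : ℕ} (N : FnSp d → ℝ≥0∞) (r : ℝ) : FnSp d → ℝ≥0∞ :=
  fun f => N (fun x => |f x| ^ (1 / r)) ^ r

/-- Non-degeneracy of an operator `T` with constant `C`. -/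
def NonDeg {d : ℕ} (T : FnSp d → FnSp d) (C : ℝ) : Prop :=
  ∀ l : ℝ, 0 < l → ∃ xl : Fin d → ℝ, ∀ Q : Cube d, Q.side = l →
    ∀ f : FnSp d, (∀ x, 0 ≤ f x) → (∀ x, x ∉ Q.set → f x = 0) →
      IntegrableOn f Q.set volume →
      ∀ x : Fin d → ℝ,
        (x ∈ (fun y => y + xl) '' Q.set ∨ x ∈ (fun y => y - xl) '' Q.set) →
        C * ((∫ y in Q.set, f y) / (volume Q.set).toReal) ≤ |T f x|

/-- `p`-convexity of a quasinorm with constant `Mc`. -/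
def PConvexN {d : ℕ} (N : FnSp d → ℝ≥0∞) (p : ℝ) (Mc : ℝ≥0∞) : Prop :=
  ∀ (n : ℕ) (f : Fin n → FnSp d),
    N (fun x => (∑ i, |f i x| ^ p) ^ (1 / p)) ≤ Mc * (∑ i, N (f i) ^ p) ^ (1 / p)

/-- The `A₁` constant of a weight. -/
def A1ConstE {d : ℕ} (w : FnSp d) : ℝ≥0∞ :=
  ⨆ Q : Cube d, avg Q w *
    essSup (Q.set.indicator fun y => (ENNReal.ofReal (w y))⁻¹) volume

/-- The `A_p` constant of a weight (with the `A₁` constant when `p = 1`). -/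
def ApConstE {d : ℕ} (p : ℝ) (w : FnSp d) : ℝ≥0∞ :=
  if p = 1 then A1ConstE w
  else ⨆ Q : Cube d,
    ((∫⁻ x in Q.set, ENNReal.ofReal (w x) ^ p) / volume Q.set) ^ (1 / p) *
      ((∫⁻ x in Q.set, ENNReal.ofReal (w x) ^ (-(p / (p - 1)))) / volume Q.set) ^ (1 - 1 / p)

/-- `A_p`-regularity of the space with quasinorm `N`, with constants `C₁, C₂`. -/
def ApRegularN {d : ℕ} (N : FnSp d → ℝ≥0∞) (p : ℝ) (C₁ C₂ : ℝ≥0∞) : Prop :=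
  ∀ f : FnSp d, MemN N f → ∃ w : FnSp d, Measurable w ∧ (∀ x, 0 < w x) ∧
    (∀ᵐ x ∂volume, |f x| ≤ w x) ∧ N w ≤ C₁ * N f ∧ ApConstE p w ≤ C₂

/-- The quasinorm of the Calderón product `X · Y`. -/
def prodENorm {d : ℕ} (N₁ N₂ : FnSp d → ℝ≥0∞) (f : FnSp d) : ℝ≥0∞ :=
  ⨅ (h : FnSp d) (k : FnSp d) (_ : AEMeasurable h volume) (_ : AEMeasurable k volume)
    (_ : ∀ x, 0 ≤ h x) (_ : ∀ x, 0 ≤ k x)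
    (_ : ∀ᵐ x ∂volume, |f x| ≤ h x * k x), N₁ h * N₂ k

/-- Cubes with rational corners. -/
def IsRatCube {d : ℕ} (Q : Cube d) : Prop :=
  (∀ i, ∃ q : ℚ, Q.corner i = (q : ℝ)) ∧ ∃ q : ℚ, Q.side = (q : ℝ)

def RatCube (d : ℕ) := {Q : Cube d // IsRatCube Q}

/-- The pointwise `ℓ^r`-norm of a family indexed by the rational cubes
(`r = ⊤` gives the `ℓ^∞` norm). -/
def lNormE {d : ℕ} (r : ℝ≥0∞) (F : RatCube d → FnSp d) (x : Fin d → ℝ) : ℝ≥0∞ :=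
  if r = ⊤ then ⨆ Q : RatCube d, ENNReal.ofReal |F Q x|
  else (∑' Q : RatCube d, ENNReal.ofReal |F Q x| ^ r.toReal) ^ (1 / r.toReal)

/-- Membership in the mixed-norm space `X[ℓ^r]`. -/
def MemMixed {d : ℕ} (X : QBFS d) (r : ℝ≥0∞) (F : RatCube d → FnSp d) : Prop :=
  (∀ Q, AEMeasurable (F Q) volume) ∧
  (∀ᵐ x ∂volume, lNormE r F x ≠ ⊤) ∧
  AEMeasurable (fun x => (lNormE r F x).toReal) volume ∧
  X.enorm (fun x => (lNormE r F x).toReal) < ⊤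

/-- The mixed norm `‖F‖_{X[ℓ^r]}`. -/
def mixedENorm {d : ℕ} (X : QBFS d) (r : ℝ≥0∞) (F : RatCube d → FnSp d) : ℝ≥0∞ :=
  X.enorm (fun x => (lNormE r F x).toReal)

/-- The linearized maximal operator `𝓜((f_Q)_Q) = (⟨f_Q⟩_Q 1_Q)_Q`. -/
def mixM {d : ℕ} (F : RatCube d → FnSp d) : RatCube d → FnSp d :=
  fun Q => Q.1.set.indicator fun _ => savg Q.1 (F Q)

/-- Boundedness of `𝓜` on `X[ℓ^r]` with constant `C`. -/
def MixMBound {d : ℕ} (X : QBFS d) (r : ℝ≥0∞) (C : ℝ≥0∞) : Prop :=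
  ∀ F : RatCube d → FnSp d, MemMixed X r F →
    (∀ Q : RatCube d, IntegrableOn (F Q) Q.1.set volume) ∧
    MemMixed X r (mixM F) ∧
    mixedENorm X r (mixM F) ≤ C * mixedENorm X r F

/-- A dyadic grid (of half-open cubes). -/
def IsDyadicGrid {d : ℕ} (D : Set (Cube d)) : Prop :=
  (∀ Q ∈ D, ∃ k : ℤ, Q.side = (2 : ℝ) ^ k) ∧
  (∀ k : ℤ, ∀ x : Fin d → ℝ, ∃! Q : Cube d, Q ∈ D ∧ Q.side = (2 : ℝ) ^ k ∧ x ∈ Q.hset) ∧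
  (∀ Q ∈ D, ∀ Q' ∈ D, Q.hset ⊆ Q'.hset ∨ Q'.hset ⊆ Q.hset ∨ Disjoint Q.hset Q'.hset)

/-- The average over a half-open cube. -/
def avgH {d : ℕ} (Q : Cube d) (f : FnSp d) : ℝ≥0∞ :=
  (∫⁻ x in Q.hset, ENNReal.ofReal |f x|) / volume Q.hset

/-- `A_𝒮 f` for half-open cubes. -/
def avgSumHE {d : ℕ} (S : Set (Cube d)) (f : FnSp d) : (Fin d → ℝ) → ℝ≥0∞ :=
  fun x => ∑' Q : S, Q.1.hset.indicator (fun _ => avgH Q.1 f) x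

/-- `η`-sparseness for half-open cubes. -/
def IsSparseH {d : ℕ} (η : ℝ) (S : Set (Cube d)) : Prop :=
  ∃ E : Cube d → Set (Fin d → ℝ),
    (∀ Q ∈ S, MeasurableSet (E Q) ∧ E Q ⊆ Q.hset ∧
      ENNReal.ofReal η * volume Q.hset ≤ volume (E Q)) ∧
    S.Pairwise fun Q Q' => Disjoint (E Q) (E Q')

/-- The maximal cubes of `E` strictly contained in `Q`. -/
def childrenH {d : ℕ} (E : Set (Cube d)) (Q : Cube d) : Set (Cube d) :=
  {Q' | Q' ∈ E ∧ Q'.hset ⊂ Q.hset ∧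
    ¬∃ Q'' ∈ E, Q'.hset ⊂ Q''.hset ∧ Q''.hset ⊂ Q.hset}

/-- The dyadic maximal operator `M^𝒟`. -/
def maximalHD {d : ℕ} (D : Set (Cube d)) (f : FnSp d) (x : Fin d → ℝ) : ℝ≥0∞ :=
  ⨆ Q ∈ D, Q.hset.indicator (fun _ => avgH Q f) x


/-- Saturation of the Köthe dual `X'`. -/
def DualSaturated {d : ℕ} (X : QBFS d) : Prop :=
  ∀ E : Set (Fin d → ℝ), MeasurableSet E → 0 < volume E →
    ∃ F : Set (Fin d → ℝ), F ⊆ E ∧ MeasurableSet F ∧ 0 < volume F ∧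
      dualENormN X.enorm (F.indicator fun _ => (1 : ℝ)) < ⊤

/-!
For a collection `𝒮` of cubes the averaging operator is symmetric,
`∫ |g| A_𝒮 f = ∫ |f| A_𝒮 g`, so Hölder's inequality `∫ |f g| ≤ ‖f‖_X ‖g‖_{X'}` transfers a bound
for `A_𝒮` on `X` to `X'`; saturation of `X` makes `A_𝒮 g` finite a.e., and a bound for a single
cube already forces `1_Q ∈ X'`, whence `X'` is saturated. The constants of `A` compare through
`‖1_Q‖_{X''} ≤ ‖1_Q‖_X`.

The converses need the Lorentz–Luxemburg inequality `‖h‖_X ≤ ‖h‖_{X''}` for a Banach function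
space with the Fatou property. If `h ∈ L²(R)` is supported in a set `R` of finite measure and
`‖h‖_X > 1`, Hahn–Banach in `L²(R)` separates `h` from the unit ball of `X` (convex since `X` is
normed, closed by the Fatou property); the separating density `ψ` has `‖1_R |ψ|‖_{X'} < ∫ |h ψ|`,
so `‖h‖_{X''} > 1`. Truncations and the Fatou property give the general case.
-/

open scoped Topology

section

variable {d : ℕ}

/-! ### Cubes -/

theorem Cube.measurableSet (Q : Cube d) : MeasurableSet Q.set := measurableSet_Icc

theorem Cube.volume_pos (Q : Cube d) : 0 < volume Q.set := by
  rw [Cube.set, Real.volume_Icc_pi, CanonicallyOrderedAdd.prod_pos]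
  intro i _
  simpa using Q.side_pos

theorem Cube.volume_lt_top (Q : Cube d) : volume Q.set < ⊤ := by
  rw [Cube.set, Real.volume_Icc_pi]
  exact ENNReal.prod_lt_top fun i _ => by simp

instance (Q : Cube d) : IsFiniteMeasure (volume.restrict Q.set) :=
  isFiniteMeasure_restrict.mpr Q.volume_lt_top.ne

theorem measurable_cubeInd (Q : Cube d) : Measurable (cubeInd Q) :=
  measurable_const.indicator Q.measurableSet

def centeredCube (n : ℕ) : Cube d := ⟨fun _ => -(n + 1 : ℝ), 2 * (n + 1), by positivity⟩

theorem mem_centeredCube {x : Fin d → ℝ} {n : ℕ} (hx : ‖x‖ ≤ n) :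
    x ∈ (centeredCube n : Cube d).set := by
  have hxi : ∀ i, |x i| ≤ n := fun i => (norm_le_pi_norm x i).trans hx
  simp only [centeredCube, Cube.set, Set.mem_Icc, Pi.le_def]
  exact ⟨fun i => by linarith [(abs_le.mp (hxi i)).1], fun i => by linarith [(abs_le.mp (hxi i)).2]⟩

theorem exists_pos_measure_inter_centeredCube {E : Set (Fin d → ℝ)} (hE : 0 < volume E) :
    ∃ n : ℕ, 0 < volume (E ∩ (centeredCube n : Cube d).set) := by
  by_contra! h
  have hcover : E = ⋃ n : ℕ, E ∩ (centeredCube n : Cube d).set := by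
    refine (Set.iUnion_subset fun n => Set.inter_subset_left).antisymm' fun x hx => ?_
    obtain ⟨n, hn⟩ := exists_nat_ge ‖x‖
    exact Set.mem_iUnion.mpr ⟨n, hx, mem_centeredCube hn⟩
  rw [hcover, measure_iUnion_null fun n => nonpos_iff_eq_zero.mp (h n)] at hE
  exact hE.ne' rfl

theorem ofReal_abs_indicator_one (F : Set (Fin d → ℝ)) (x : Fin d → ℝ) :
    ENNReal.ofReal |F.indicator (fun _ => (1 : ℝ)) x| = F.indicator 1 x := by
  by_cases hx : x ∈ F <;> simp [hx]

theorem lintegral_ofReal_abs_mul_indicator_one {F : Set (Fin d → ℝ)} (hF : MeasurableSet F)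
    (f : FnSp d) :
    ∫⁻ x, ENNReal.ofReal |f x * F.indicator (fun _ => (1 : ℝ)) x|
      = ∫⁻ x in F, ENNReal.ofReal |f x| := by
  rw [← lintegral_indicator hF]
  refine lintegral_congr fun x => ?_
  by_cases hx : x ∈ F <;> simp [hx]

theorem lintegral_ofReal_abs_mul_cubeInd (Q : Cube d) (f : FnSp d) :
    ∫⁻ x, ENNReal.ofReal |f x * cubeInd Q x| = ∫⁻ x in Q.set, ENNReal.ofReal |f x| :=
  lintegral_ofReal_abs_mul_indicator_one Q.measurableSet f

theorem setLIntegral_eq_avg_mul (Q : Cube d) (f : FnSp d) :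
    ∫⁻ x in Q.set, ENNReal.ofReal |f x| = avg Q f * volume Q.set := by
  rw [avg, ENNReal.div_mul_cancel Q.volume_pos.ne' Q.volume_lt_top.ne]

theorem avg_indicator_one {Q : Cube d} {F : Set (Fin d → ℝ)} (hF : MeasurableSet F)
    (hFQ : F ⊆ Q.set) : avg Q (F.indicator fun _ => (1 : ℝ)) = volume F / volume Q.set := by
  simp_rw [avg, ofReal_abs_indicator_one, lintegral_indicator_one hF,
    Measure.restrict_apply hF, Set.inter_eq_self_of_subset_left hFQ]

/-! ### Quasinorms and the Köthe dual -/

namespace QBFS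

variable (X : QBFS d)

theorem enorm_zero : X.enorm 0 = 0 := by
  have h := X.enorm_smul 0 0
  rw [zero_smul, abs_zero, ENNReal.ofReal_zero, zero_mul] at h
  exact h

theorem enorm_abs {f : FnSp d} (hf : AEMeasurable f volume) :
    X.enorm (fun x => |f x|) = X.enorm f :=
  le_antisymm (X.ideal f _ hf hf.abs (Eventually.of_forall fun x => (abs_abs (f x)).le))
    (X.ideal _ f hf.abs hf (Eventually.of_forall fun x => (abs_abs (f x)).ge))

theorem enorm_indicator_one_pos {F : Set (Fin d → ℝ)} (hF : MeasurableSet F)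
    (hpos : 0 < volume F) : 0 < X.enorm (F.indicator fun _ => (1 : ℝ)) := by
  refine pos_iff_ne_zero.mpr fun h0 => hpos.ne' ?_
  have hzero := ae_iff.mp (X.enorm_definite _ (measurable_const.indicator hF).aemeasurable h0)
  exact measure_mono_null (fun x hx => by simp [hx]) hzero

end QBFS

theorem dualENormN_le {N : FnSp d → ℝ≥0∞} {g : FnSp d} {c : ℝ≥0∞}
    (h : ∀ f : FnSp d, AEMeasurable f volume → N f = 1 →
      ∫⁻ x, ENNReal.ofReal |f x * g x| ≤ c) : dualENormN N g ≤ c :=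
  iSup₂_le fun f hf => h f hf.1 hf.2

theorem lintegral_le_dualENormN {N : FnSp d → ℝ≥0∞} {f : FnSp d} (g : FnSp d)
    (hf : AEMeasurable f volume) (h1 : N f = 1) :
    ∫⁻ x, ENNReal.ofReal |f x * g x| ≤ dualENormN N g :=
  le_iSup₂ (f := fun f (_ : f ∈ {f : FnSp d | AEMeasurable f volume ∧ N f = 1}) =>
    ∫⁻ x, ENNReal.ofReal |f x * g x|) f ⟨hf, h1⟩

theorem dualENormN_mono (N : FnSp d → ℝ≥0∞) {g h : FnSp d}
    (hgh : ∀ᵐ x ∂volume, |g x| ≤ |h x|) : dualENormN N g ≤ dualENormN N h := by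
  refine iSup₂_mono fun f _ => lintegral_mono_ae ?_
  filter_upwards [hgh] with x hx
  rw [abs_mul, abs_mul]
  exact ENNReal.ofReal_le_ofReal (mul_le_mul_of_nonneg_left hx (abs_nonneg _))

theorem dualENormN_smul (N : FnSp d → ℝ≥0∞) (c : ℝ) (g : FnSp d) :
    dualENormN N (c • g) = ENNReal.ofReal |c| * dualENormN N g := by
  simp_rw [dualENormN, ENNReal.mul_iSup, ← lintegral_const_mul' _ _ ENNReal.ofReal_ne_top,
    ← ENNReal.ofReal_mul (abs_nonneg c), Pi.smul_apply, smul_eq_mul, ← abs_mul, mul_left_comm]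

theorem lintegral_le_mul_dualENormN {N : FnSp d → ℝ≥0∞}
    (hsmul : ∀ (c : ℝ) (f : FnSp d), N (c • f) = ENNReal.ofReal |c| * N f)
    {f : FnSp d} (g : FnSp d) (hf : AEMeasurable f volume) (h0 : N f ≠ 0) (htop : N f ≠ ⊤) :
    ∫⁻ x, ENNReal.ofReal |f x * g x| ≤ N f * dualENormN N g := by
  set c : ℝ := (N f).toReal⁻¹
  have hc : 0 ≤ c := inv_nonneg.mpr ENNReal.toReal_nonneg
  have hcN : ENNReal.ofReal c = (N f)⁻¹ := by
    rw [ENNReal.ofReal_inv_of_pos (ENNReal.toReal_pos h0 htop), ENNReal.ofReal_toReal htop]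
  have hnorm : N (c • f) = 1 := by
    rw [hsmul, abs_of_nonneg hc, hcN, ENNReal.inv_mul_cancel h0 htop]
  have hscale : ∀ x, ENNReal.ofReal |(c • f) x * g x| = (N f)⁻¹ * ENNReal.ofReal |f x * g x| :=
    fun x => by
      rw [Pi.smul_apply, smul_eq_mul, mul_assoc, abs_mul, abs_of_nonneg hc,
        ENNReal.ofReal_mul hc, hcN]
  have hpair := lintegral_le_dualENormN (N := N) g (hf.const_smul c) hnorm
  simp_rw [hscale, lintegral_const_mul' _ _ (ENNReal.inv_ne_top.mpr h0)] at hpair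
  rwa [← ENNReal.inv_mul_le_iff h0 htop]

namespace QBFS

variable (X : QBFS d)

theorem lintegral_mul_le {f : FnSp d} (g : FnSp d) (hf : AEMeasurable f volume)
    (htop : X.enorm f ≠ ⊤) :
    ∫⁻ x, ENNReal.ofReal |f x * g x| ≤ X.enorm f * dualENormN X.enorm g := by
  rcases eq_or_ne (X.enorm f) 0 with h0 | h0
  · have hzero : (fun x => ENNReal.ofReal |f x * g x|) =ᵐ[volume] 0 := by
      filter_upwards [X.enorm_definite f hf h0] with x hx
      simp [hx]
    rw [lintegral_congr_ae hzero]
    simp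
  · exact lintegral_le_mul_dualENormN X.enorm_smul g hf h0 htop

theorem dualENormN_dualENormN_le {h : FnSp d} (hm : AEMeasurable h volume)
    (htop : X.enorm h ≠ ⊤) : dualENormN (dualENormN X.enorm) h ≤ X.enorm h :=
  dualENormN_le fun g _ hg => by
    simpa only [mul_comm (h _), hg, mul_one] using X.lintegral_mul_le g hm htop

/-- Saturation of `X` makes its Köthe dual norm definite. -/
theorem dualENormN_pos {g : FnSp d} (hgm : Measurable g) (hpos : 0 < volume {x | g x ≠ 0}) :
    0 < dualENormN X.enorm g := by
  obtain ⟨F, hFsub, hF, hFpos, hFfin⟩ := X.saturation _ (hgm (measurableSet_singleton 0).compl) hpos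
  refine pos_iff_ne_zero.mpr fun h0 => hFpos.ne' ?_
  have hint := X.lintegral_mul_le g (measurable_const.indicator hF).aemeasurable hFfin.ne
  have hmeas : Measurable fun x => ENNReal.ofReal |F.indicator (fun _ => (1 : ℝ)) x * g x| :=
    (((measurable_const.indicator hF).mul hgm).abs.ennreal_ofReal)
  rw [h0, mul_zero, nonpos_iff_eq_zero, lintegral_eq_zero_iff hmeas] at hint
  refine measure_mono_null (fun x hx => ?_) (ae_iff.mp hint)
  simpa [hx] using hFsub hx

end QBFS

/-! ### The Lorentz–Luxemburg theorem -/

theorem lintegral_ofReal_mul_le_of_truncations {α : Type*} [MeasurableSpace α] {μ : Measure α}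
    {f ψ : α → ℝ} (hf : AEMeasurable f μ) (hψ : AEMeasurable ψ μ) {c : ℝ≥0∞}
    (h : ∀ m : ℕ, ∫⁻ x, ENNReal.ofReal (min |f x| m * |ψ x|) ∂μ ≤ c) :
    ∫⁻ x, ENNReal.ofReal (|f x| * |ψ x|) ∂μ ≤ c := by
  have hsup : ∀ x, ⨆ m : ℕ, ENNReal.ofReal (min |f x| m * |ψ x|)
      = ENNReal.ofReal (|f x| * |ψ x|) := by
    intro x
    obtain ⟨m₀, hm₀⟩ := exists_nat_ge |f x|
    refine le_antisymm (iSup_le fun m => ?_) ?_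
    · exact ENNReal.ofReal_le_ofReal
        (mul_le_mul_of_nonneg_right (min_le_left _ _) (abs_nonneg _))
    · exact le_iSup_of_le m₀ (by rw [min_eq_left hm₀])
  have hmono : ∀ᵐ x ∂μ, Monotone fun m : ℕ => ENNReal.ofReal (min |f x| m * |ψ x|) :=
    ae_of_all _ fun x i j hij => ENNReal.ofReal_le_ofReal
      (mul_le_mul_of_nonneg_right (min_le_min_left _ (Nat.cast_le.mpr hij)) (abs_nonneg _))
  have hmeas : ∀ m : ℕ, AEMeasurable (fun x => ENNReal.ofReal (min |f x| m * |ψ x|)) μ :=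
    fun m => ((hf.abs.min aemeasurable_const).mul hψ.abs).ennreal_ofReal
  calc ∫⁻ x, ENNReal.ofReal (|f x| * |ψ x|) ∂μ
      = ∫⁻ x, ⨆ m : ℕ, ENNReal.ofReal (min |f x| m * |ψ x|) ∂μ :=
        lintegral_congr fun x => (hsup x).symm
    _ = ⨆ m : ℕ, ∫⁻ x, ENNReal.ofReal (min |f x| m * |ψ x|) ∂μ := lintegral_iSup' hmeas hmono
    _ ≤ c := iSup_le h

namespace QBFS

variable (X : QBFS d) {R : Set (Fin d → ℝ)}

/-- Apply the Fatou property to the monotone approximants `⨅ k ≥ n, |v k|` of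
`liminf |v n| = |w|`. -/
theorem enorm_le_of_ae_tendsto (hF : HasFatou X) {v : ℕ → FnSp d} {w : FnSp d}
    (hv : ∀ n, AEMeasurable (v n) volume) (hw : AEMeasurable w volume)
    (hlim : ∀ᵐ x ∂volume, Tendsto (fun n => v n x) atTop (𝓝 (w x)))
    {c : ℝ≥0∞} (hc : c ≠ ⊤) (hle : ∀ n, X.enorm (v n) ≤ c) : X.enorm w ≤ c := by
  set I : ℕ → (Fin d → ℝ) → ℝ≥0∞ := fun n x => ⨅ k ≥ n, ENNReal.ofReal |v k x|
  have hI_mono : ∀ x, Monotone fun n => I n x :=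
    fun x n m hnm => biInf_mono fun k hk => hnm.trans hk
  have hI_le : ∀ n x, I n x ≤ ENNReal.ofReal |v n x| := fun n x => iInf₂_le n le_rfl
  have hI_ne_top : ∀ n x, I n x ≠ ⊤ :=
    fun n x => ne_top_of_le_ne_top ENNReal.ofReal_ne_top (hI_le n x)
  set W : ℕ → FnSp d := fun n x => (I n x).toReal
  have hW_meas : ∀ n, AEMeasurable (W n) volume := fun n =>
    (AEMeasurable.iInf fun k => AEMeasurable.iInf fun _ => (hv k).abs.ennreal_ofReal).ennreal_toReal
  have hW_norm : ∀ n, X.enorm (W n) ≤ c := fun n =>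
    (X.ideal _ _ (hv n) (hW_meas n) (Eventually.of_forall fun x => by
      rw [abs_of_nonneg ENNReal.toReal_nonneg]
      exact (ENNReal.toReal_mono ENNReal.ofReal_ne_top (hI_le n x)).trans_eq
        (ENNReal.toReal_ofReal (abs_nonneg _)))).trans (hle n)
  have hW_lim : ∀ᵐ x ∂volume, Tendsto (fun n => W n x) atTop (𝓝 |w x|) := by
    filter_upwards [hlim] with x hx
    have hliminf : ⨆ n, I n x = ENNReal.ofReal |w x| := by
      rw [← liminf_eq_iSup_iInf_of_nat]
      exact ((ENNReal.continuous_ofReal.tendsto _).comp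
        ((continuous_abs.tendsto _).comp hx)).liminf_eq
    have hI_lim := tendsto_atTop_iSup (hI_mono x)
    rw [hliminf] at hI_lim
    have hW := (ENNReal.tendsto_toReal ENNReal.ofReal_ne_top).comp hI_lim
    rwa [ENNReal.toReal_ofReal (abs_nonneg _)] at hW
  have hFatou := hF W (fun x => |w x|) hW_meas hw.abs
    (fun n => Eventually.of_forall fun x =>
      ⟨ENNReal.toReal_nonneg, ENNReal.toReal_mono (hI_ne_top (n + 1) x) (hI_mono x n.le_succ)⟩)
    hW_lim ((iSup_le hW_norm).trans_lt hc.lt_top)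
  rw [← X.enorm_abs hw, hFatou]
  exact iSup_le hW_norm

def restrictedUnitBall (R : Set (Fin d → ℝ)) : Set (Lp ℝ 2 (volume.restrict R)) :=
  {u | X.enorm (R.indicator u) ≤ 1}

theorem convex_restrictedUnitBall (hB : IsBanachFS X) (hR : MeasurableSet R) :
    Convex ℝ (X.restrictedUnitBall R) := by
  intro u hu v hv a b ha hb hab
  have hcoe : R.indicator ⇑(a • u + b • v)
      =ᵐ[volume] a • R.indicator ⇑u + b • R.indicator ⇑v := by
    refine ((ae_eq_restrict_iff_indicator_ae_eq hR).mp
      ((Lp.coeFn_add _ _).trans ((Lp.coeFn_smul a u).add (Lp.coeFn_smul b v)))).trans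
      (Eventually.of_forall fun x => ?_)
    by_cases hx : x ∈ R <;> simp [hx]
  change X.enorm _ ≤ 1
  rw [X.enorm_congr _ _ hcoe]
  calc X.enorm (a • R.indicator ⇑u + b • R.indicator ⇑v)
      ≤ X.enorm (a • R.indicator ⇑u) + X.enorm (b • R.indicator ⇑v) := hB _ _
    _ = ENNReal.ofReal a * X.enorm (R.indicator ⇑u)
        + ENNReal.ofReal b * X.enorm (R.indicator ⇑v) := by
      rw [X.enorm_smul, X.enorm_smul, abs_of_nonneg ha, abs_of_nonneg hb]
    _ ≤ ENNReal.ofReal a * 1 + ENNReal.ofReal b * 1 := by gcongr; exacts [hu, hv]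
    _ = 1 := by rw [mul_one, mul_one, ← ENNReal.ofReal_add ha hb, hab, ENNReal.ofReal_one]

theorem isClosed_restrictedUnitBall (hF : HasFatou X) (hR : MeasurableSet R) :
    IsClosed (X.restrictedUnitBall R) := by
  refine IsSeqClosed.isClosed fun u w hu huw => ?_
  obtain ⟨ns, -, hae⟩ := (tendstoInMeasure_of_tendsto_Lp huw).exists_seq_tendsto_ae
  have hmeas : ∀ v : Lp ℝ 2 (volume.restrict R), AEMeasurable (R.indicator v) volume :=
    fun v => (aemeasurable_indicator_iff hR).mpr (Lp.aestronglyMeasurable v).aemeasurable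
  refine X.enorm_le_of_ae_tendsto hF (fun n => hmeas _) (hmeas w) ?_ ENNReal.one_ne_top
    fun n => hu (ns n)
  filter_upwards [ae_imp_of_ae_restrict hae] with x hx
  by_cases hxR : x ∈ R
  · simpa only [Set.indicator_of_mem hxR] using hx hxR
  · simpa only [Set.indicator_of_notMem hxR] using tendsto_const_nhds

/-- Hahn–Banach in `L²(R)`, with the separating functional represented by a density `ψ`. -/
theorem exists_separating_density (hB : IsBanachFS X) (hF : HasFatou X) (hR : MeasurableSet R)
    (hRfin : volume R ≠ ⊤) {h : FnSp d} (hh : MemLp h 2 (volume.restrict R))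
    (hgt : 1 < X.enorm (R.indicator h)) :
    ∃ ψ : FnSp d, Measurable ψ ∧ IntegrableOn ψ R ∧ ∃ s : ℝ,
      (∀ u : FnSp d, MemLp u 2 (volume.restrict R) → X.enorm (R.indicator u) ≤ 1 →
        ∫ x in R, ψ x * u x < s) ∧ s < ∫ x in R, ψ x * h x := by
  have : IsFiniteMeasure (volume.restrict R) := isFiniteMeasure_restrict.mpr hRfin
  have hball : ∀ u : FnSp d, (hu : MemLp u 2 (volume.restrict R)) →
      (hu.toLp u ∈ X.restrictedUnitBall R ↔ X.enorm (R.indicator u) ≤ 1) := fun u hu => by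
    change X.enorm _ ≤ 1 ↔ _
    rw [X.enorm_congr _ _ ((ae_eq_restrict_iff_indicator_ae_eq hR).mp hu.coeFn_toLp)]
  obtain ⟨φ, s, hφ_ball, hφ_h⟩ := geometric_hahn_banach_closed_point
    (X.convex_restrictedUnitBall hB hR) (X.isClosed_restrictedUnitBall hF hR)
    (fun hmem => hgt.not_ge ((hball h hh).mp hmem))
  set φv : Lp ℝ 2 (volume.restrict R) := (InnerProductSpace.toDual ℝ _).symm φ
  have hφv := (Lp.aestronglyMeasurable φv).ae_eq_mk
  set ψ : FnSp d := (Lp.aestronglyMeasurable φv).mk φv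
  have hφ : ∀ u : FnSp d, (hu : MemLp u 2 (volume.restrict R)) →
      φ (hu.toLp u) = ∫ x in R, ψ x * u x := fun u hu => by
    rw [← InnerProductSpace.toDual_symm_apply (𝕜 := ℝ) (y := φ), L2.inner_def]
    refine integral_congr_ae ?_
    filter_upwards [hφv, hu.coeFn_toLp] with x h1 h2
    rw [h1, h2]
    simp [mul_comm]
  refine ⟨ψ, (Lp.aestronglyMeasurable φv).stronglyMeasurable_mk.measurable,
    ((Lp.memLp φv).integrable one_le_two).congr hφv, s, fun u hu hle => ?_, ?_⟩
  · rw [← hφ u hu]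
    exact hφ_ball _ ((hball u hu).mpr hle)
  · rwa [← hφ h hh]

/-- The test function is `min |f| m · sign ψ`. -/
theorem setIntegral_min_mul_abs_lt_of_separating {ψ : FnSp d} (hψ : Measurable ψ) {s : ℝ}
    (hsep : ∀ u : FnSp d, MemLp u 2 (volume.restrict R) → X.enorm (R.indicator u) ≤ 1 →
      ∫ x in R, ψ x * u x < s)
    (hR : MeasurableSet R) (hRfin : volume R ≠ ⊤) {f : FnSp d} (hf : AEMeasurable f volume)
    (hf1 : X.enorm f ≤ 1) (m : ℕ) : ∫ x in R, min |f x| m * |ψ x| < s := by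
  have : IsFiniteMeasure (volume.restrict R) := isFiniteMeasure_restrict.mpr hRfin
  set σ : FnSp d := fun x => if 0 ≤ ψ x then 1 else -1
  have hσ_abs : ∀ x, |σ x| = 1 := fun x => by
    simp only [σ]
    split_ifs <;> norm_num
  have hψσ : ∀ x, ψ x * σ x = |ψ x| := fun x => by
    simp only [σ]
    split_ifs with hx
    · rw [mul_one, abs_of_nonneg hx]
    · rw [mul_neg_one, abs_of_neg (not_le.mp hx)]
  set u : FnSp d := fun x => min |f x| m * σ x
  have hu_abs : ∀ x, |u x| = min |f x| m := fun x => by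
    rw [abs_mul, hσ_abs, mul_one, abs_of_nonneg (le_min (abs_nonneg _) m.cast_nonneg)]
  have hu_meas : AEMeasurable u volume := (hf.abs.min aemeasurable_const).mul
    (Measurable.ite (measurableSet_le measurable_const hψ) measurable_const
      measurable_const).aemeasurable
  have hu : MemLp u 2 (volume.restrict R) :=
    MemLp.of_bound hu_meas.aestronglyMeasurable.restrict m
      (ae_of_all _ fun x => by rw [Real.norm_eq_abs, hu_abs]; exact min_le_right _ _)
  have hu_ball : X.enorm (R.indicator u) ≤ 1 :=
    (X.ideal f _ hf (hu_meas.indicator hR) (ae_of_all _ fun x => by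
      by_cases hx : x ∈ R
      · rw [Set.indicator_of_mem hx, hu_abs]; exact min_le_left _ _
      · rw [Set.indicator_of_notMem hx, abs_zero]; exact abs_nonneg _)).trans hf1
  convert hsep u hu hu_ball using 1
  refine integral_congr_ae (ae_of_all _ fun x => ?_)
  change min |f x| m * |ψ x| = ψ x * (min |f x| m * σ x)
  rw [← hψσ]
  ring

theorem dualENormN_indicator_abs_le_of_separating {ψ : FnSp d} (hψ : Measurable ψ)
    (hψi : IntegrableOn ψ R) {s : ℝ}
    (hsep : ∀ u : FnSp d, MemLp u 2 (volume.restrict R) → X.enorm (R.indicator u) ≤ 1 →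
      ∫ x in R, ψ x * u x < s)
    (hR : MeasurableSet R) (hRfin : volume R ≠ ⊤) :
    dualENormN X.enorm (R.indicator fun x => |ψ x|) ≤ ENNReal.ofReal s := by
  refine dualENormN_le fun f hf hf1 => ?_
  have hpair : ∀ x, ENNReal.ofReal |f x * R.indicator (fun x => |ψ x|) x|
      = R.indicator (fun x => ENNReal.ofReal (|f x| * |ψ x|)) x := fun x => by
    by_cases hx : x ∈ R <;> simp [hx, abs_mul]
  rw [lintegral_congr hpair, lintegral_indicator hR]
  refine lintegral_ofReal_mul_le_of_truncations hf.restrict hψ.aemeasurable.restrict fun m => ?_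
  have hnonneg : ∀ x, 0 ≤ min |f x| m * |ψ x| :=
    fun x => mul_nonneg (le_min (abs_nonneg _) m.cast_nonneg) (abs_nonneg _)
  have hint : Integrable (fun x => min |f x| m * |ψ x|) (volume.restrict R) :=
    (hψi.norm.const_mul m).mono' ((hf.abs.min aemeasurable_const).restrict.mul
      hψ.abs.aemeasurable.restrict).aestronglyMeasurable (ae_of_all _ fun x => by
        rw [Real.norm_eq_abs, abs_of_nonneg (hnonneg x), Real.norm_eq_abs]
        exact mul_le_mul_of_nonneg_right (min_le_right _ _) (abs_nonneg _))
  rw [← ofReal_integral_eq_lintegral_ofReal hint (ae_of_all _ hnonneg)]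
  exact ENNReal.ofReal_le_ofReal
    (X.setIntegral_min_mul_abs_lt_of_separating hψ hsep hR hRfin hf hf1.le m).le

theorem enorm_le_one_of_dualENormN_dualENormN_le_one (hB : IsBanachFS X) (hF : HasFatou X)
    (hR : MeasurableSet R) (hRfin : volume R ≠ ⊤) {h : FnSp d}
    (hh : MemLp h 2 (volume.restrict R)) (hsupp : R.indicator h = h)
    (hle : dualENormN (dualENormN X.enorm) h ≤ 1) : X.enorm h ≤ 1 := by
  by_contra! hgt
  rw [← hsupp] at hgt
  obtain ⟨ψ, hψ, hψi, s, hsep, hsh⟩ := X.exists_separating_density hB hF hR hRfin hh hgt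
  set g : FnSp d := R.indicator fun x => |ψ x|
  have hs : 0 < s := by
    simpa using hsep 0 MemLp.zero (by simp [X.enorm_zero])
  have hgs : dualENormN X.enorm g ≤ ENNReal.ofReal s :=
    X.dualENormN_indicator_abs_le_of_separating hψ hψi hsep hR hRfin
  have hpair : ENNReal.ofReal s < ∫⁻ x, ENNReal.ofReal |g x * h x| := by
    calc ENNReal.ofReal s < ENNReal.ofReal (∫ x in R, ψ x * h x) :=
          (ENNReal.ofReal_lt_ofReal_iff (hs.trans hsh)).mpr hsh
      _ ≤ ‖∫ x in R, ψ x * h x‖ₑ := by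
          rw [Real.enorm_eq_ofReal_abs]; exact ENNReal.ofReal_le_ofReal (le_abs_self _)
      _ ≤ ∫⁻ x in R, ‖ψ x * h x‖ₑ := enorm_integral_le_lintegral_enorm _
      _ = ∫⁻ x, ENNReal.ofReal |g x * h x| := by
          rw [← lintegral_indicator hR]
          refine lintegral_congr fun x => ?_
          by_cases hx : x ∈ R <;> simp [g, hx, Real.enorm_eq_ofReal_abs, abs_mul]
  have hg_pos : 0 < dualENormN X.enorm g := by
    refine X.dualENormN_pos (hψ.abs.indicator hR) (pos_iff_ne_zero.mpr fun h0 => ?_)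
    have hzero : (fun x => ENNReal.ofReal |g x * h x|) =ᵐ[volume] 0 := by
      filter_upwards [measure_eq_zero_iff_ae_notMem.mp h0] with x hx
      simp [not_not.mp hx]
    rw [lintegral_congr_ae hzero] at hpair
    simp at hpair
  have hholder := lintegral_le_mul_dualENormN (dualENormN_smul X.enorm) h
    (hψ.abs.indicator hR).aemeasurable hg_pos.ne' (hgs.trans_lt ENNReal.ofReal_lt_top).ne
  exact hpair.not_ge (hholder.trans ((mul_le_of_le_one_right' hle).trans hgs))

theorem enorm_le_dualENormN_dualENormN_of_memLp (hB : IsBanachFS X) (hF : HasFatou X)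
    (hR : MeasurableSet R) (hRfin : volume R ≠ ⊤) {h : FnSp d}
    (hh : MemLp h 2 (volume.restrict R)) (hsupp : R.indicator h = h) :
    X.enorm h ≤ dualENormN (dualENormN X.enorm) h := by
  refine le_of_forall_gt_imp_ge_of_dense fun b hb => ?_
  rcases eq_or_ne b ⊤ with rfl | hbtop
  · exact le_top
  have ht : 0 < b.toReal := ENNReal.toReal_pos (pos_of_gt hb).ne' hbtop
  have hinv : ENNReal.ofReal |b.toReal⁻¹| = b⁻¹ := by
    rw [abs_of_pos (inv_pos.mpr ht), ENNReal.ofReal_inv_of_pos ht, ENNReal.ofReal_toReal hbtop]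
  have hscaled := X.enorm_le_one_of_dualENormN_dualENormN_le_one hB hF hR hRfin
    (hh.const_smul b.toReal⁻¹)
    ((Set.indicator_const_smul R b.toReal⁻¹ h).trans (by rw [hsupp]; rfl))
    (by rw [dualENormN_smul, hinv, ENNReal.inv_mul_le_iff (pos_of_gt hb).ne' hbtop, mul_one]
        exact hb.le)
  rwa [X.enorm_smul, hinv, ENNReal.inv_mul_le_iff (pos_of_gt hb).ne' hbtop, mul_one] at hscaled

/-- Lorentz–Luxemburg; the reverse inequality is `dualENormN_dualENormN_le`. -/
theorem enorm_le_dualENormN_dualENormN (hB : IsBanachFS X) (hF : HasFatou X) {h : FnSp d}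
    (hm : AEMeasurable h volume) : X.enorm h ≤ dualENormN (dualENormN X.enorm) h := by
  rcases eq_or_ne (dualENormN (dualENormN X.enorm) h) ⊤ with htop | htop
  · exact htop ▸ le_top
  set v : ℕ → FnSp d := fun n => (centeredCube n : Cube d).set.indicator fun x => min |h x| n
  have hv_le : ∀ n x, |v n x| ≤ min |h x| n := fun n x => by
    by_cases hx : x ∈ (centeredCube n : Cube d).set
    · simp [v, hx, abs_of_nonneg (le_min (abs_nonneg (h x)) n.cast_nonneg)]
    · simp [v, hx, abs_nonneg (h x)]
  have hv_meas : ∀ n, AEMeasurable (v n) volume :=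
    fun n => (hm.abs.min aemeasurable_const).indicator (centeredCube n).measurableSet
  have hv_lim : ∀ x, Tendsto (fun n => v n x) atTop (𝓝 |h x|) := fun x => by
    obtain ⟨N, hN⟩ := exists_nat_ge (max ‖x‖ |h x|)
    refine tendsto_atTop_of_eventually_const fun n (hn : N ≤ n) => ?_
    have hNn : max ‖x‖ |h x| ≤ n := hN.trans (Nat.cast_le.mpr hn)
    simp only [v, Set.indicator_of_mem (mem_centeredCube ((le_max_left _ _).trans hNn))]
    exact min_eq_left ((le_max_right _ _).trans hNn)
  have hv_norm : ∀ n, X.enorm (v n) ≤ dualENormN (dualENormN X.enorm) h := fun n =>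
    (X.enorm_le_dualENormN_dualENormN_of_memLp hB hF (centeredCube n).measurableSet
      (centeredCube n).volume_lt_top.ne
      (MemLp.of_bound (hv_meas n).aestronglyMeasurable.restrict n (ae_of_all _ fun x =>
        (hv_le n x).trans (min_le_right _ _)))
      (by rw [Set.indicator_indicator, Set.inter_self])).trans
    (dualENormN_mono _ (ae_of_all _ fun x => (hv_le n x).trans (min_le_left _ _)))
  rw [← X.enorm_abs hm]
  exact X.enorm_le_of_ae_tendsto hF hv_meas hm.abs (ae_of_all _ hv_lim) htop hv_norm

end QBFS

/-! ### Averaging operators -/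

theorem Set.Countable.of_pairwise_disjoint_measure_pos {α ι : Type*} [MeasurableSpace α]
    {μ : Measure α} [SFinite μ] {S : Set ι} {E : ι → Set α} (hE : ∀ i ∈ S, MeasurableSet (E i))
    (hpos : ∀ i ∈ S, 0 < μ (E i)) (hdisj : S.Pairwise fun i j => Disjoint (E i) (E j)) :
    S.Countable := by
  have hcount := Measure.countable_meas_pos_of_disjoint_iUnion (μ := μ) (As := fun i : S => E i)
    (fun i => hE i i.2) fun i j hij => hdisj i.2 j.2 (Subtype.coe_injective.ne hij)
  rw [show {i : S | 0 < μ (E i)} = Set.univ from Set.eq_univ_of_forall fun i => hpos i i.2,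
    Set.countable_univ_iff] at hcount
  exact Set.countable_coe_iff.mp hcount

theorem PairwiseDisjointCubes.countable {P : Set (Cube d)} (hP : PairwiseDisjointCubes P) :
    P.Countable :=
  .of_pairwise_disjoint_measure_pos (μ := volume) (fun Q _ => Q.measurableSet)
    (fun Q _ => Q.volume_pos) hP

theorem IsSparse.countable {η : ℝ} (hη : 0 < η) {S : Set (Cube d)} (hS : IsSparse η S) :
    S.Countable := by
  obtain ⟨E, hE, hdisj⟩ := hS
  refine .of_pairwise_disjoint_measure_pos (μ := volume) (fun Q hQ => (hE Q hQ).1)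
    (fun Q hQ => ?_) hdisj
  exact (ENNReal.mul_pos (ENNReal.ofReal_pos.mpr hη).ne' Q.volume_pos.ne').trans_le (hE Q hQ).2.2

theorem isSparse_singleton {η : ℝ} (hη : η ≤ 1) (Q : Cube d) : IsSparse η {Q} := by
  refine ⟨fun Q' => Q'.set, fun Q' _ => ⟨Q'.measurableSet, subset_rfl, ?_⟩,
    Set.pairwise_singleton _ _⟩
  calc ENNReal.ofReal η * volume Q'.set ≤ 1 * volume Q'.set := by
        gcongr
        exact ENNReal.ofReal_le_one.mpr hη
    _ = volume Q'.set := one_mul _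

theorem measurable_avgSumE {S : Set (Cube d)} (hS : S.Countable) (f : FnSp d) :
    Measurable (avgSumE S f) := by
  have := hS.to_subtype
  exact .tsum fun Q => measurable_const.indicator Q.1.measurableSet

theorem avgSumE_singleton (Q : Cube d) (f : FnSp d) :
    avgSumE {Q} f = Q.set.indicator fun _ => avg Q f := by
  ext x
  exact tsum_eq_single (⟨Q, rfl⟩ : ({Q} : Set (Cube d)))
    fun Q' hQ' => absurd (Subtype.ext (Set.mem_singleton_iff.mp Q'.2)) hQ'

theorem lintegral_ofReal_abs_mul_avgSumE {S : Set (Cube d)} (hS : S.Countable) {f : FnSp d}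
    (hf : AEMeasurable f volume) (g : FnSp d) :
    ∫⁻ x, ENNReal.ofReal |f x| * avgSumE S g x
      = ∑' Q : S, avg Q.1 g * ∫⁻ x in Q.1.set, ENNReal.ofReal |f x| := by
  have := hS.to_subtype
  have hterm : ∀ (Q : S) x, ENNReal.ofReal |f x| * Q.1.set.indicator (fun _ => avg Q.1 g) x
      = Q.1.set.indicator (fun y => avg Q.1 g * ENNReal.ofReal |f y|) x := fun Q x => by
    by_cases hx : x ∈ Q.1.set <;> simp [hx, mul_comm]
  simp_rw [avgSumE, ← ENNReal.tsum_mul_left, hterm]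
  rw [lintegral_tsum fun Q => (hf.abs.ennreal_ofReal.const_mul _).indicator Q.1.measurableSet]
  exact tsum_congr fun Q => by
    rw [lintegral_indicator Q.1.measurableSet,
      lintegral_const_mul'' _ hf.abs.ennreal_ofReal.restrict]

theorem lintegral_ofReal_abs_mul_avgSumE_comm {S : Set (Cube d)} (hS : S.Countable)
    {f g : FnSp d} (hf : AEMeasurable f volume) (hg : AEMeasurable g volume) :
    ∫⁻ x, ENNReal.ofReal |f x| * avgSumE S g x = ∫⁻ x, ENNReal.ofReal |g x| * avgSumE S f x := by
  rw [lintegral_ofReal_abs_mul_avgSumE hS hf, lintegral_ofReal_abs_mul_avgSumE hS hg]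
  refine tsum_congr fun Q => ?_
  rw [setLIntegral_eq_avg_mul, setLIntegral_eq_avg_mul, mul_left_comm]

theorem setLIntegral_avgSumE {S : Set (Cube d)} (hS : S.Countable) {F : Set (Fin d → ℝ)}
    (hF : MeasurableSet F) {g : FnSp d} (hg : AEMeasurable g volume) :
    ∫⁻ x in F, avgSumE S g x
      = ∫⁻ x, ENNReal.ofReal |g x| * avgSumE S (F.indicator fun _ => (1 : ℝ)) x := by
  rw [← lintegral_ofReal_abs_mul_avgSumE_comm hS (measurable_const.indicator hF).aemeasurable hg,
    ← lintegral_indicator hF]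
  refine lintegral_congr fun x => ?_
  by_cases hx : x ∈ F <;> simp [hx]

theorem lintegral_ofReal_abs_toReal_mul {A : (Fin d → ℝ) → ℝ≥0∞} (hA : ∀ᵐ x ∂volume, A x ≠ ⊤)
    (g : FnSp d) :
    ∫⁻ x, ENNReal.ofReal |(A x).toReal * g x| = ∫⁻ x, ENNReal.ofReal |g x| * A x := by
  refine lintegral_congr_ae ?_
  filter_upwards [hA] with x hx
  rw [abs_mul, abs_of_nonneg ENNReal.toReal_nonneg, ENNReal.ofReal_mul ENNReal.toReal_nonneg,
    ENNReal.ofReal_toReal hx, mul_comm]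

/-- `X.saturation` and `DualSaturated X` are this property of `X.enorm` and of its Köthe dual. -/
def SaturatedN (N : FnSp d → ℝ≥0∞) : Prop :=
  ∀ E : Set (Fin d → ℝ), MeasurableSet E → 0 < volume E →
    ∃ F : Set (Fin d → ℝ), F ⊆ E ∧ MeasurableSet F ∧ 0 < volume F ∧
      N (F.indicator fun _ => (1 : ℝ)) < ⊤

theorem ae_ne_top_of_saturatedN {N : FnSp d → ℝ≥0∞} (hN : SaturatedN N)
    {A : (Fin d → ℝ) → ℝ≥0∞} (hA : Measurable A)
    (hfin : ∀ F, MeasurableSet F → N (F.indicator fun _ => (1 : ℝ)) < ⊤ → ∫⁻ x in F, A x ≠ ⊤) :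
    ∀ᵐ x ∂volume, A x ≠ ⊤ := by
  refine ae_iff.mpr (by_contra fun hpos => ?_)
  obtain ⟨F, hFT, hF, hFpos, hFN⟩ :=
    hN _ (by simp only [ne_eq, not_not]; exact hA (measurableSet_singleton ⊤))
      (pos_iff_ne_zero.mpr hpos)
  refine hfin F hF hFN ?_
  rw [setLIntegral_congr_fun hF fun x hx => (not_not.mp (hFT hx) : A x = ⊤), setLIntegral_const,
    ENNReal.top_mul hFpos.ne']

namespace QBFS

variable (X : QBFS d) {S : Set (Cube d)} {C : ℝ≥0∞}

theorem lintegral_mul_avgSumE_le (hb : SparseBoundOneN X.enorm S C) (hC : C ≠ ⊤)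
    {f : FnSp d} (hf : MemN X.enorm f) (g : FnSp d) :
    ∫⁻ x, ENNReal.ofReal |g x| * avgSumE S f x ≤ C * X.enorm f * dualENormN X.enorm g := by
  obtain ⟨hfin, hmeas, hnorm⟩ := hb f hf
  rw [← lintegral_ofReal_abs_toReal_mul hfin]
  exact (X.lintegral_mul_le g hmeas (hnorm.trans_lt (ENNReal.mul_lt_top hC.lt_top hf.2)).ne).trans
    (mul_le_mul_left hnorm _)

theorem lintegral_mul_avgSumE_le_of_dual (hb : SparseBoundOneN (dualENormN X.enorm) S C)
    {g : FnSp d} (hg : MemN (dualENormN X.enorm) g) {f : FnSp d} (hf : MemN X.enorm f) :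
    ∫⁻ x, ENNReal.ofReal |f x| * avgSumE S g x ≤ X.enorm f * (C * dualENormN X.enorm g) := by
  obtain ⟨hfin, hmeas, hnorm⟩ := hb g hg
  rw [← lintegral_ofReal_abs_toReal_mul hfin]
  simp_rw [mul_comm _ (f _)]
  exact (X.lintegral_mul_le _ hf.1 hf.2.ne).trans (mul_le_mul_right hnorm _)

theorem dual_sparseBoundOneN (hS : S.Countable) (hC : C ≠ ⊤)
    (hb : SparseBoundOneN X.enorm S C) : SparseBoundOneN (dualENormN X.enorm) S C := by
  intro g hg
  have hfin : ∀ᵐ x ∂volume, avgSumE S g x ≠ ⊤ :=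
    ae_ne_top_of_saturatedN X.saturation (measurable_avgSumE hS g) fun F hF hFN => by
      rw [setLIntegral_avgSumE hS hF hg.1]
      exact ((X.lintegral_mul_avgSumE_le hb hC ⟨(measurable_const.indicator hF).aemeasurable, hFN⟩
        g).trans_lt (ENNReal.mul_lt_top (ENNReal.mul_lt_top hC.lt_top hFN) hg.2)).ne
  refine ⟨hfin, (measurable_avgSumE hS g).ennreal_toReal.aemeasurable,
    dualENormN_le fun f hf hf1 => ?_⟩
  calc ∫⁻ x, ENNReal.ofReal |f x * (avgSumE S g x).toReal|
      = ∫⁻ x, ENNReal.ofReal |f x| * avgSumE S g x := by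
        simp_rw [mul_comm (f _)]
        exact lintegral_ofReal_abs_toReal_mul hfin f
    _ = ∫⁻ x, ENNReal.ofReal |g x| * avgSumE S f x :=
        lintegral_ofReal_abs_mul_avgSumE_comm hS hf hg.1
    _ ≤ C * X.enorm f * dualENormN X.enorm g :=
        X.lintegral_mul_avgSumE_le hb hC ⟨hf, hf1 ▸ ENNReal.one_lt_top⟩ g
    _ = C * dualENormN X.enorm g := by rw [hf1, mul_one]

theorem sparseBoundOneN_of_dual (hB : IsBanachFS X) (hF : HasFatou X) (hS : S.Countable)
    (hC : C ≠ ⊤) (hsat : DualSaturated X) (hb : SparseBoundOneN (dualENormN X.enorm) S C) :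
    SparseBoundOneN X.enorm S C := by
  intro f hf
  have hfin : ∀ᵐ x ∂volume, avgSumE S f x ≠ ⊤ :=
    ae_ne_top_of_saturatedN hsat (measurable_avgSumE hS f) fun F hF hFN => by
      rw [setLIntegral_avgSumE hS hF hf.1]
      exact ((X.lintegral_mul_avgSumE_le_of_dual hb
        ⟨(measurable_const.indicator hF).aemeasurable, hFN⟩ hf).trans_lt
        (ENNReal.mul_lt_top hf.2 (ENNReal.mul_lt_top hC.lt_top hFN))).ne
  have hmeas : AEMeasurable (fun x => (avgSumE S f x).toReal) volume :=
    (measurable_avgSumE hS f).ennreal_toReal.aemeasurable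
  refine ⟨hfin, hmeas, (X.enorm_le_dualENormN_dualENormN hB hF hmeas).trans
    (dualENormN_le fun g hg hg1 => ?_)⟩
  calc ∫⁻ x, ENNReal.ofReal |g x * (avgSumE S f x).toReal|
      = ∫⁻ x, ENNReal.ofReal |g x| * avgSumE S f x := by
        simp_rw [mul_comm (g _)]
        exact lintegral_ofReal_abs_toReal_mul hfin g
    _ = ∫⁻ x, ENNReal.ofReal |f x| * avgSumE S g x :=
        lintegral_ofReal_abs_mul_avgSumE_comm hS hg hf.1
    _ ≤ X.enorm f * (C * dualENormN X.enorm g) :=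
        X.lintegral_mul_avgSumE_le_of_dual hb ⟨hg, hg1 ▸ ENNReal.one_lt_top⟩ hf
    _ = C * X.enorm f := by rw [hg1, mul_one, mul_comm]

end QBFS

/-! ### Single cubes and the saturation of the dual -/

theorem toReal_avgSumE_singleton (Q : Cube d) (f : FnSp d) :
    (fun x => (avgSumE {Q} f x).toReal) = (avg Q f).toReal • cubeInd Q := by
  ext x
  by_cases hx : x ∈ Q.set <;> simp [avgSumE_singleton, cubeInd, hx]

theorem avg_ne_top_of_ae_avgSumE_singleton_ne_top {Q : Cube d} {f : FnSp d}
    (h : ∀ᵐ x ∂volume, avgSumE {Q} f x ≠ ⊤) : avg Q f ≠ ⊤ := fun htop => by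
  have hQ : ∀ᵐ x ∂volume, x ∉ Q.set := by
    filter_upwards [h] with x hx hxQ
    simp [avgSumE_singleton, hxQ, htop] at hx
  exact Q.volume_pos.ne' (by simpa using ae_iff.mp hQ)

theorem lt_top_of_sparseBoundOneN_singleton {N : FnSp d → ℝ≥0∞}
    (hsmul : ∀ (c : ℝ) (f : FnSp d), N (c • f) = ENNReal.ofReal |c| * N f) {Q : Cube d}
    {C : ℝ≥0∞} (hb : SparseBoundOneN N {Q} C) (hC : C ≠ ⊤) {g : FnSp d} (hg : MemN N g)
    (hpos : avg Q g ≠ 0) : N (cubeInd Q) < ⊤ := by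
  obtain ⟨hfin, -, hnorm⟩ := hb g hg
  rw [toReal_avgSumE_singleton, hsmul, abs_of_nonneg ENNReal.toReal_nonneg,
    ENNReal.ofReal_toReal (avg_ne_top_of_ae_avgSumE_singleton_ne_top hfin)] at hnorm
  refine lt_top_iff_ne_top.mpr fun htop => ?_
  rw [htop, ENNReal.mul_top hpos] at hnorm
  exact (ENNReal.mul_lt_top hC.lt_top hg.2).not_ge hnorm

namespace QBFS

variable (X : QBFS d) {C : ℝ≥0∞}

theorem cubeInd_lt_top_of_sparseBoundOneN (hC : C ≠ ⊤)
    {Q : Cube d} (hb : SparseBoundOneN X.enorm {Q} C) :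
    X.enorm (cubeInd Q) < ⊤ ∧ dualENormN X.enorm (cubeInd Q) < ⊤ := by
  obtain ⟨F, hFQ, hF, hFpos, hFfin⟩ := X.saturation Q.set Q.measurableSet Q.volume_pos
  have hXQ : X.enorm (cubeInd Q) < ⊤ :=
    lt_top_of_sparseBoundOneN_singleton X.enorm_smul hb hC
      ⟨(measurable_const.indicator hF).aemeasurable, hFfin⟩
      (by rw [avg_indicator_one hF hFQ]; exact (ENNReal.div_pos hFpos.ne' Q.volume_lt_top.ne).ne')
  have hXQ0 := (X.enorm_indicator_one_pos Q.measurableSet Q.volume_pos).ne'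
  -- `⟨f⟩_Q ‖1_Q‖ ≤ C ‖f‖` bounds `∫_Q |f| = ⟨f⟩_Q |Q|`
  refine ⟨hXQ, lt_of_le_of_lt (b := C / X.enorm (cubeInd Q) * volume Q.set) ?_
    (ENNReal.mul_lt_top (ENNReal.div_lt_top hC hXQ0) Q.volume_lt_top)⟩
  refine dualENormN_le fun f hf hf1 => ?_
  obtain ⟨hfin, -, hnorm⟩ := hb f ⟨hf, hf1 ▸ ENNReal.one_lt_top⟩
  rw [toReal_avgSumE_singleton, X.enorm_smul, abs_of_nonneg ENNReal.toReal_nonneg,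
    ENNReal.ofReal_toReal (avg_ne_top_of_ae_avgSumE_singleton_ne_top hfin), hf1, mul_one] at hnorm
  rw [lintegral_ofReal_abs_mul_cubeInd, setLIntegral_eq_avg_mul]
  exact mul_le_mul_left ((ENNReal.le_div_iff_mul_le (Or.inl hXQ0) (Or.inl hXQ.ne)).mpr hnorm) _

theorem exists_memN_dual_avg_ne_zero (hB : IsBanachFS X) (hF : HasFatou X) (Q : Cube d) :
    ∃ g, MemN (dualENormN X.enorm) g ∧ avg Q g ≠ 0 := by
  obtain ⟨F, hFQ, hFm, hFpos, -⟩ := X.saturation Q.set Q.measurableSet Q.volume_pos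
  have hpos := (X.enorm_indicator_one_pos hFm hFpos).trans_le
    (X.enorm_le_dualENormN_dualENormN hB hF (measurable_const.indicator hFm).aemeasurable)
  rw [dualENormN] at hpos
  simp only [lt_iSup_iff] at hpos
  obtain ⟨g, ⟨hg, hg1⟩, hgF⟩ := hpos
  refine ⟨g, ⟨hg, hg1 ▸ ENNReal.one_lt_top⟩, (ENNReal.div_pos ?_ Q.volume_lt_top.ne).ne'⟩
  rw [lintegral_ofReal_abs_mul_indicator_one hFm] at hgF
  exact (hgF.trans_le (lintegral_mono_set hFQ)).ne'

theorem dualENormN_cubeInd_lt_top_of_dual (hB : IsBanachFS X) (hF : HasFatou X) (hC : C ≠ ⊤)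
    {Q : Cube d} (hb : SparseBoundOneN (dualENormN X.enorm) {Q} C) :
    dualENormN X.enorm (cubeInd Q) < ⊤ := by
  obtain ⟨g, hg, hpos⟩ := X.exists_memN_dual_avg_ne_zero hB hF Q
  exact lt_top_of_sparseBoundOneN_singleton (dualENormN_smul X.enorm) hb hC hg hpos

theorem dualSaturated_of_cubeInd (hQ : ∀ Q : Cube d, dualENormN X.enorm (cubeInd Q) < ⊤) :
    DualSaturated X := by
  intro E hE hpos
  obtain ⟨n, hn⟩ := exists_pos_measure_inter_centeredCube hpos
  refine ⟨_, Set.inter_subset_left, hE.inter (centeredCube n).measurableSet, hn,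
    (dualENormN_mono _ (ae_of_all _ fun x => ?_)).trans_lt (hQ (centeredCube n))⟩
  by_cases hx : x ∈ E ∩ (centeredCube n : Cube d).set
  · simp [hx, hx.2, cubeInd]
  · simp [hx]

end QBFS

/-! ### Duality of the conditions -/

theorem sInf_le_sInf_of_forall_ne_top {p q : ℝ≥0∞ → Prop} (h : ∀ C, C ≠ ⊤ → q C → p C) :
    sInf {C | p C} ≤ sInf {C | q C} :=
  le_sInf fun C hC => (eq_or_ne C ⊤).elim (fun hC' => hC' ▸ le_top) fun hC' => sInf_le (h C hC' hC)

/-- For `𝒞` the pairwise disjoint collections this is `StrongBoundN`, for `𝒞` the `1/2`-sparse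
ones `SparseBoundN`. -/
def BoundedOnN (𝒞 : Set (Set (Cube d))) (N : FnSp d → ℝ≥0∞) (C : ℝ≥0∞) : Prop :=
  ∀ S ∈ 𝒞, SparseBoundOneN N S C

namespace QBFS

variable (X : QBFS d) {𝒞 : Set (Set (Cube d))} {C : ℝ≥0∞}

theorem dualSaturated_of_boundedOnN (h𝒞 : ∀ Q : Cube d, {Q} ∈ 𝒞) (hC : C ≠ ⊤)
    (hb : BoundedOnN 𝒞 X.enorm C) : DualSaturated X :=
  X.dualSaturated_of_cubeInd fun Q => (X.cubeInd_lt_top_of_sparseBoundOneN hC (hb _ (h𝒞 Q))).2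

theorem dual_boundedOnN (h𝒞 : ∀ S ∈ 𝒞, S.Countable) (hC : C ≠ ⊤)
    (hb : BoundedOnN 𝒞 X.enorm C) : BoundedOnN 𝒞 (dualENormN X.enorm) C :=
  fun S hS => X.dual_sparseBoundOneN (h𝒞 S hS) hC (hb S hS)

theorem boundedOnN_of_dual (hB : IsBanachFS X) (hF : HasFatou X)
    (h𝒞c : ∀ S ∈ 𝒞, S.Countable) (h𝒞s : ∀ Q : Cube d, {Q} ∈ 𝒞) (hC : C ≠ ⊤)
    (hb : BoundedOnN 𝒞 (dualENormN X.enorm) C) : BoundedOnN 𝒞 X.enorm C :=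
  have hsat := X.dualSaturated_of_cubeInd fun Q =>
    X.dualENormN_cubeInd_lt_top_of_dual hB hF hC (hb _ (h𝒞s Q))
  fun S hS => X.sparseBoundOneN_of_dual hB hF (h𝒞c S hS) hC hsat (hb S hS)

theorem boundedOnN_duality (h𝒞c : ∀ S ∈ 𝒞, S.Countable) (h𝒞s : ∀ Q : Cube d, {Q} ∈ 𝒞) :
    ((∃ C, C < ⊤ ∧ BoundedOnN 𝒞 X.enorm C) →
      DualSaturated X ∧ (∃ C, C < ⊤ ∧ BoundedOnN 𝒞 (dualENormN X.enorm) C) ∧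
        sInf {C | BoundedOnN 𝒞 (dualENormN X.enorm) C} ≤ sInf {C | BoundedOnN 𝒞 X.enorm C}) ∧
    (IsBanachFS X → HasFatou X →
      ((∃ C, C < ⊤ ∧ BoundedOnN 𝒞 X.enorm C) ↔
        (∃ C, C < ⊤ ∧ BoundedOnN 𝒞 (dualENormN X.enorm) C)) ∧
      ((∃ C, C < ⊤ ∧ BoundedOnN 𝒞 X.enorm C) →
        sInf {C | BoundedOnN 𝒞 (dualENormN X.enorm) C} = sInf {C | BoundedOnN 𝒞 X.enorm C})) := by
  have hdual_le := sInf_le_sInf_of_forall_ne_top fun C hC => X.dual_boundedOnN h𝒞c hC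
  refine ⟨fun ⟨C, hC, hb⟩ => ⟨X.dualSaturated_of_boundedOnN h𝒞s hC.ne hb,
    ⟨C, hC, X.dual_boundedOnN h𝒞c hC.ne hb⟩, hdual_le⟩, fun hB hF => ⟨?_, fun _ => ?_⟩⟩
  · exact ⟨fun ⟨C, hC, hb⟩ => ⟨C, hC, X.dual_boundedOnN h𝒞c hC.ne hb⟩,
      fun ⟨C, hC, hb⟩ => ⟨C, hC, X.boundedOnN_of_dual hB hF h𝒞c h𝒞s hC.ne hb⟩⟩
  · exact hdual_le.antisymm (sInf_le_sInf_of_forall_ne_top fun C hC =>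
      X.boundedOnN_of_dual hB hF h𝒞c h𝒞s hC)

theorem muckAN_dual (hA : MuckAN X.enorm) :
    DualSaturated X ∧ MuckAN (dualENormN X.enorm) ∧
      muckAConstN (dualENormN X.enorm) ≤ muckAConstN X.enorm := by
  obtain ⟨hQ, hA⟩ := hA
  have hdd : ∀ Q : Cube d, dualENormN (dualENormN X.enorm) (cubeInd Q) ≤ X.enorm (cubeInd Q) :=
    fun Q => X.dualENormN_dualENormN_le (measurable_cubeInd Q).aemeasurable (hQ Q).1.ne
  have hle : muckAConstN (dualENormN X.enorm) ≤ muckAConstN X.enorm :=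
    iSup_mono fun Q => by
      rw [mul_comm (X.enorm _)]
      gcongr
      exact hdd Q
  exact ⟨X.dualSaturated_of_cubeInd fun Q => (hQ Q).2,
    ⟨fun Q => ⟨(hQ Q).2, (hdd Q).trans_lt (hQ Q).1⟩, hle.trans_lt hA⟩, hle⟩

theorem muckAConstN_le_dual (hB : IsBanachFS X) (hF : HasFatou X) :
    muckAConstN X.enorm ≤ muckAConstN (dualENormN X.enorm) :=
  iSup_mono fun Q => by
    rw [mul_comm (X.enorm _)]
    gcongr
    exact X.enorm_le_dualENormN_dualENormN hB hF (measurable_cubeInd Q).aemeasurable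

theorem muckAN_of_dual (hB : IsBanachFS X) (hF : HasFatou X)
    (hA : MuckAN (dualENormN X.enorm)) : MuckAN X.enorm :=
  ⟨fun Q => ⟨(X.enorm_le_dualENormN_dualENormN hB hF (measurable_cubeInd Q).aemeasurable).trans_lt
    (hA.1 Q).2, (hA.1 Q).1⟩, (X.muckAConstN_le_dual hB hF).trans_lt hA.2⟩

end QBFS

end

/-- duality of the conditions `A`, `A_strong`, `A_sparse`. -/
theorem statement3 {d : ℕ} (X : QBFS d) :
    (MuckAN X.enorm →
      DualSaturated X ∧ MuckAN (dualENormN X.enorm) ∧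
        muckAConstN (dualENormN X.enorm) ≤ muckAConstN X.enorm) ∧
    (IsBanachFS X → HasFatou X →
      (MuckAN X.enorm ↔ MuckAN (dualENormN X.enorm)) ∧
      (MuckAN X.enorm → muckAConstN (dualENormN X.enorm) = muckAConstN X.enorm)) ∧
    ((∃ C, C < ⊤ ∧ StrongBoundN X.enorm C) →
      DualSaturated X ∧ (∃ C, C < ⊤ ∧ StrongBoundN (dualENormN X.enorm) C) ∧
        sInf {C | StrongBoundN (dualENormN X.enorm) C} ≤ sInf {C | StrongBoundN X.enorm C}) ∧
    (IsBanachFS X → HasFatou X →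
      ((∃ C, C < ⊤ ∧ StrongBoundN X.enorm C) ↔
        (∃ C, C < ⊤ ∧ StrongBoundN (dualENormN X.enorm) C)) ∧
      ((∃ C, C < ⊤ ∧ StrongBoundN X.enorm C) →
        sInf {C | StrongBoundN (dualENormN X.enorm) C} = sInf {C | StrongBoundN X.enorm C})) ∧
    ((∃ C, C < ⊤ ∧ SparseBoundN X.enorm C) →
      DualSaturated X ∧ (∃ C, C < ⊤ ∧ SparseBoundN (dualENormN X.enorm) C) ∧
        sInf {C | SparseBoundN (dualENormN X.enorm) C} ≤ sInf {C | SparseBoundN X.enorm C}) ∧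
    (IsBanachFS X → HasFatou X →
      ((∃ C, C < ⊤ ∧ SparseBoundN X.enorm C) ↔
        (∃ C, C < ⊤ ∧ SparseBoundN (dualENormN X.enorm) C)) ∧
      ((∃ C, C < ⊤ ∧ SparseBoundN X.enorm C) →
        sInf {C | SparseBoundN (dualENormN X.enorm) C} = sInf {C | SparseBoundN X.enorm C})) := by
  have hstrong := X.boundedOnN_duality (𝒞 := {P | PairwiseDisjointCubes P})
    (fun _ hP => PairwiseDisjointCubes.countable hP) fun _ => Set.pairwise_singleton _ _
  have hsparse := X.boundedOnN_duality (𝒞 := {S | IsSparse (1 / 2) S})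
    (fun _ hS => IsSparse.countable one_half_pos hS) fun Q => isSparse_singleton (by norm_num) Q
  refine ⟨X.muckAN_dual, fun hB hF => ⟨⟨fun hA => (X.muckAN_dual hA).2.1, X.muckAN_of_dual hB hF⟩,
    fun hA => (X.muckAN_dual hA).2.2.antisymm (X.muckAConstN_le_dual hB hF)⟩,
    hstrong.1, hstrong.2, hsparse.1, hsparse.2⟩

end
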